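/- arXiv:0808.0928 — 5 statements merged into one kernel-verified Lean document; each statement's English description precedes it below -/
import Mathlib

section
/- For every integer n ≥ 0, the following identity of polynomials in two variables u₁, u₂ over ℚ holds: ∑_{π ∈ Inv(n)} u₁^{α₁(π)} u₂^{α₂(π)} = ∑_{0 ≤ k ≤ n/2} (n! / (2^k · k! · (n − 2k)!)) · u₁^{n−2k} u₂^k, where the left sum is over all involutions π in S_n and the right sum is over integers k with 0 ≤ 2k ≤ n. (This is the coefficient of t^n/n! in e^{u₁ t + u₂ t²/2}.) -/
/-!
An involution is exactly a permutation all of whose cycles have length `2`, so the involutions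
with `k` two-cycles are the permutations of cycle type `2ᵏ`; such a permutation has `n - 2k`
fixed points, and by the orbit–stabilizer count of a conjugacy class in `Sₙ` there are
`n! / (2ᵏ k! (n - 2k)!)` of them. Grouping the involutions by `k` gives the identity.
-/

open scoped BigOperators

/-- The number of fixed points of a permutation of `Fin n`. -/
def fixedPts {n : ℕ} (π : Equiv.Perm (Fin n)) : ℕ :=
  (Finset.univ.filter fun i => π i = i).card

/-- The number of 2-cycles of an involution of `Fin n`: since `α₁(π) + 2α₂(π) = n`,
it equals `(n − α₁(π)) / 2`. -/
def twoCycles {n : ℕ} (π : Equiv.Perm (Fin n)) : ℕ :=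
  (n - fixedPts π) / 2

open Finset MvPolynomial
open scoped Nat

namespace Equiv.Perm

variable {α : Type*} [Fintype α] [DecidableEq α]

theorem pow_eq_one_and_card_cycleType_eq_iff {σ : Perm α} {p k : ℕ} [Fact p.Prime] :
    σ ^ p = 1 ∧ Multiset.card σ.cycleType = k ↔ σ.cycleType = Multiset.replicate k p := by
  rw [pow_prime_eq_one_iff, Multiset.eq_replicate, and_comm]

theorem mul_card_cycleType_le_of_pow_eq_one {σ : Perm α} {p : ℕ} [Fact p.Prime] (hσ : σ ^ p = 1) :
    p * Multiset.card σ.cycleType ≤ Fintype.card α := by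
  have h := σ.sum_cycleType_le
  rwa [cycleType_of_pow_prime_eq_one hσ, Multiset.sum_replicate, smul_eq_mul, mul_comm] at h

variable (α) in
theorem card_cycleType_eq_replicate_mul {p k : ℕ} (hp : 2 ≤ p) (hk : k * p ≤ Fintype.card α) :
    #{σ : Perm α | σ.cycleType = Multiset.replicate k p} *
        ((Fintype.card α - k * p)! * p ^ k * k !) = (Fintype.card α)! := by
  have hcount : ∏ m ∈ (Multiset.replicate k p).toFinset,
      ((Multiset.replicate k p).count m)! = k ! := by
    rcases Nat.eq_zero_or_pos k with rfl | hk0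
    · simp
    · rw [Multiset.toFinset_replicate, if_neg hk0.ne', prod_singleton,
        Multiset.count_replicate_self]
  have hcond : (Multiset.replicate k p).sum ≤ Fintype.card α ∧
      ∀ a ∈ Multiset.replicate k p, 2 ≤ a :=
    ⟨by simpa using hk, fun a ha => (Multiset.eq_of_mem_replicate ha).symm ▸ hp⟩
  have h := card_of_cycleType_mul_eq α (Multiset.replicate k p)
  rwa [if_pos hcond, Multiset.sum_replicate, Multiset.prod_replicate, hcount, smul_eq_mul] at h

end Equiv.Perm

theorem fixedPts_add_card_support {n : ℕ} (π : Equiv.Perm (Fin n)) :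
    fixedPts π + #π.support = n := by
  rw [fixedPts, Equiv.Perm.support, card_filter_add_card_filter_not, card_univ, Fintype.card_fin]

section CycleTypeReplicateTwo

variable {n k : ℕ} {π : Equiv.Perm (Fin n)}

theorem two_mul_add_fixedPts_of_cycleType_eq (hπ : π.cycleType = Multiset.replicate k 2) :
    2 * k + fixedPts π = n := by
  have h := fixedPts_add_card_support π
  rw [← Equiv.Perm.sum_cycleType, hπ, Multiset.sum_replicate, smul_eq_mul] at h
  omega

theorem fixedPts_of_cycleType_eq (hπ : π.cycleType = Multiset.replicate k 2) :
    fixedPts π = n - 2 * k := by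
  have h := two_mul_add_fixedPts_of_cycleType_eq hπ
  omega

theorem twoCycles_of_cycleType_eq (hπ : π.cycleType = Multiset.replicate k 2) :
    twoCycles π = k := by
  have h := two_mul_add_fixedPts_of_cycleType_eq hπ
  rw [twoCycles]
  omega

end CycleTypeReplicateTwo

theorem cast_card_cycleType_eq_replicate_two {n k : ℕ} (hk : 2 * k ≤ n) :
    (#{π : Equiv.Perm (Fin n) | π.cycleType = Multiset.replicate k 2} : ℚ) =
      n ! / (2 ^ k * k ! * (n - 2 * k)!) := by
  have h := Equiv.Perm.card_cycleType_eq_replicate_mul (Fin n) (k := k) le_rfl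
    (by rw [Fintype.card_fin]; omega)
  rw [Fintype.card_fin, mul_comm k] at h
  rw [eq_div_iff (by positivity), ← h]
  push_cast
  ring

/-- Touchard's formula for involutions, coefficientwise:
`∑_{π ∈ Inv(n)} u₁^{α₁(π)} u₂^{α₂(π)} = ∑_{0 ≤ 2k ≤ n} (n!/(2ᵏ k! (n−2k)!)) u₁^{n−2k} u₂ᵏ`
as polynomials in `u₁ = X 0`, `u₂ = X 1` over `ℚ`. -/
theorem involution_gf (n : ℕ) :
    ∑ π ∈ (Finset.univ.filter fun π : Equiv.Perm (Fin n) => π * π = 1),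
        (MvPolynomial.X 0 : MvPolynomial (Fin 2) ℚ) ^ fixedPts π *
          MvPolynomial.X 1 ^ twoCycles π =
      ∑ k ∈ Finset.range (n / 2 + 1),
        MvPolynomial.C ((n.factorial : ℚ) / (2 ^ k * k.factorial * (n - 2 * k).factorial)) *
          MvPolynomial.X 0 ^ (n - 2 * k) * MvPolynomial.X 1 ^ k := by
  set involutions := Finset.univ.filter fun π : Equiv.Perm (Fin n) => π * π = 1
  have hmaps : ∀ π ∈ involutions, Multiset.card π.cycleType ∈ range (n / 2 + 1) := fun π hπ => by
    have := Equiv.Perm.mul_card_cycleType_le_of_pow_eq_one (p := 2)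
      ((sq π).trans (mem_filter.mp hπ).2)
    rw [Fintype.card_fin] at this
    rw [mem_range]
    omega
  have hfiber (k : ℕ) : involutions.filter (fun π => Multiset.card π.cycleType = k) =
      Finset.univ.filter (fun π => π.cycleType = Multiset.replicate k 2) := by
    ext π
    simp only [involutions, filter_filter, mem_filter, mem_univ, true_and, ← sq]
    exact Equiv.Perm.pow_eq_one_and_card_cycleType_eq_iff
  rw [← sum_fiberwise_of_maps_to hmaps]
  refine sum_congr rfl fun k hk => ?_
  rw [hfiber, sum_congr rfl fun π hπ => by
      rw [fixedPts_of_cycleType_eq (mem_filter.mp hπ).2,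
        twoCycles_of_cycleType_eq (mem_filter.mp hπ).2],
    sum_const, nsmul_eq_mul, ← map_natCast C,
    cast_card_cycleType_eq_replicate_two (by rw [mem_range] at hk; omega)]
  exact (mul_assoc _ _ _).symm
end

section
/- Let d ≥ 1 and let x₁, …, x_d, y₁, …, y_{d−1} be 2d − 1 distinct integers. Then in the field ℚ(q) of rational functions, ∑_{k=1}^{d} ( ∏_{i=1, i≠k}^{d} w(x_k − x_i) / ∏_{i=1}^{d−1} w(x_k − y_i) ) + ∑_{k=1}^{d−1} ( ∏_{i=1, i≠k}^{d−1} w(y_k − y_i) / ∏_{i=1}^{d} w(y_k − x_i) ) = 1, where w(h) = (1 + q^h)/(1 − q^h) for a nonzero integer h (q^h being interpreted in ℚ(q) for negative h as well). -/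
open scoped BigOperators

/-- `w h = (1 + q^h) / (1 - q^h)` in `ℚ(q)`, where `q = RatFunc.X` (for negative `h`,
`q^h` is interpreted via `zpow` in the field `ℚ(q)`). -/
noncomputable def w (h : ℤ) : RatFunc ℚ :=
  (1 + RatFunc.X ^ h) / (1 - RatFunc.X ^ h)

/-!
Since `w (a - b) = (q^b + q^a) / (q^b - q^a)`, putting `u = q^{x_k}` at the nodes of the first
family and `u = -q^{y_k}` at those of the second turns every summand into
`∏_{i ≠ m} (u_i + u_m) / (u_i - u_m)`, the two kinds of factors `w` and `w⁻¹` coming from the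
sign of `u_i u_m`. For any `N` distinct nonzero `u_i` these summands add up to `(1 - (-1)^N) / 2`:
the polynomial `∏ (X + u_i) - ∏ (X - u_i)` has degree `< N`, so it equals its Lagrange
interpolant at the nodes `u_i`, and evaluating both at `0` gives the identity. Here `N = 2d - 1`.
-/

open Polynomial Finset Lagrange

theorem Finset.prod_univ_erase_inl {α β M : Type*} [Fintype α] [Fintype β] [DecidableEq α]
    [DecidableEq β] [CommMonoid M] (f : α ⊕ β → M) (a : α) :
    ∏ i ∈ univ.erase (Sum.inl a), f i = (∏ i ∈ univ.erase a, f (.inl i)) * ∏ j, f (.inr j) := by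
  rw [← prod_disjSum]
  congr 1
  ext (i | j) <;> simp

theorem Finset.prod_univ_erase_inr {α β M : Type*} [Fintype α] [Fintype β] [DecidableEq α]
    [DecidableEq β] [CommMonoid M] (f : α ⊕ β → M) (b : β) :
    ∏ i ∈ univ.erase (Sum.inr b), f i = (∏ i, f (.inl i)) * ∏ j ∈ univ.erase b, f (.inr j) := by
  rw [← prod_disjSum]
  congr 1
  ext (i | j) <;> simp

section NodeIdentity

variable {K ι : Type*} [Field K] [Fintype ι] [DecidableEq ι] {u : ι → K}

theorem prod_neg_mul_nodalWeight_mul_prod_add {m : ι} (hm : u m ≠ 0) :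
    (∏ i, -u i) * (nodalWeight univ u m * (-u m)⁻¹ * ∏ i, (u m + u i)) =
      2 * (∏ i, u i) * ∏ i ∈ univ.erase m, (u i + u m) / (u i - u m) := by
  have hfactor : (∏ i ∈ univ.erase m, -u i) * nodalWeight univ u m *
      ∏ i ∈ univ.erase m, (u m + u i) =
      (∏ i ∈ univ.erase m, u i) * ∏ i ∈ univ.erase m, (u i + u m) / (u i - u m) := by
    rw [nodalWeight, ← prod_mul_distrib, ← prod_mul_distrib, ← prod_mul_distrib]
    exact prod_congr rfl fun i _ => by rw [← neg_sub, inv_neg]; ring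
  rw [← mul_prod_erase univ (fun i => -u i) (mem_univ m),
    ← mul_prod_erase univ (fun i => u m + u i) (mem_univ m),
    ← mul_prod_erase univ u (mem_univ m)]
  linear_combination (2 * u m * ((∏ i ∈ univ.erase m, -u i) * nodalWeight univ u m *
      ∏ i ∈ univ.erase m, (u m + u i))) * mul_inv_cancel₀ (neg_ne_zero.2 hm) + 2 * u m * hfactor

theorem two_mul_sum_prod_add_div_sub (hu : Function.Injective u) (hu0 : ∀ i, u i ≠ 0) :
    2 * ∑ m, ∏ i ∈ univ.erase m, (u i + u m) / (u i - u m) = 1 - (-1) ^ Fintype.card ι := by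
  set A := nodal univ (fun i => -u i)
  set B := nodal univ u
  have hdeg : (A - B).degree < #(univ : Finset ι) :=
    calc (A - B).degree < A.degree :=
          degree_sub_lt_left (by rw [degree_nodal, degree_nodal]) nodal_ne_zero
            (by rw [nodal_monic.leadingCoeff, nodal_monic.leadingCoeff])
      _ = _ := degree_nodal
  have h := congrArg (eval 0) (eq_interpolate (v := u) hu.injOn hdeg)
  rw [eval_interpolate_not_at_node _ fun i _ => (hu0 i).symm] at h
  simp only [A, B, eval_sub, eval_nodal, eval_nodal_at_node (mem_univ _), sub_zero, zero_sub,
    sub_neg_eq_add, zero_add] at h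
  rw [mul_sum, sum_congr rfl fun m _ => prod_neg_mul_nodalWeight_mul_prod_add (hu0 m),
    ← mul_sum, prod_neg, card_univ] at h
  have hP : ∏ i, u i ≠ 0 := prod_ne_zero_iff.2 fun i _ => hu0 i
  refine mul_left_cancel₀ hP ?_
  linear_combination -h

end NodeIdentity

namespace RatFunc

variable {F : Type*} [Field F]

theorem X_zpow_injective : Function.Injective fun c : ℤ => (X : RatFunc F) ^ c := fun a b h => by
  classical
  simpa using congrArg (inftyValuation F) h

theorem X_zpow_add_X_zpow_ne_zero [NeZero (2 : F)] (a b : ℤ) :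
    (X : RatFunc F) ^ a + X ^ b ≠ 0 := by
  classical
  intro h
  obtain rfl : a = b := by
    simpa using congrArg (inftyValuation F) (eq_neg_of_add_eq_zero_left h)
  have h2 : (2 : RatFunc F) ≠ 0 := by
    rw [← map_ofNat C 2]
    exact (_root_.map_ne_zero C).2 two_ne_zero
  exact mul_ne_zero h2 (zpow_ne_zero a X_ne_zero) (by rw [two_mul]; exact h)

end RatFunc

theorem w_sub (a b : ℤ) :
    w (a - b) = (RatFunc.X ^ b + RatFunc.X ^ a) / (RatFunc.X ^ b - RatFunc.X ^ a) := by
  have hb : (RatFunc.X : RatFunc ℚ) ^ b ≠ 0 := zpow_ne_zero b RatFunc.X_ne_zero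
  rw [w, zpow_sub₀ RatFunc.X_ne_zero,
    eq_comm, ← div_div_div_cancel_right₀ hb, add_div, sub_div, div_self hb]

section SignedNodes

variable {α β : Type*} {x : α → ℤ} {y : β → ℤ}

noncomputable def signedXZPow (x : α → ℤ) (y : β → ℤ) : α ⊕ β → RatFunc ℚ :=
  Sum.elim (fun i => RatFunc.X ^ x i) (fun j => -RatFunc.X ^ y j)

theorem signedXZPow_injective (h : Function.Injective (Sum.elim x y)) :
    Function.Injective (signedXZPow x y) :=
  (RatFunc.X_zpow_injective.comp (h.comp Sum.inl_injective)).sumElim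
    (neg_injective.comp (RatFunc.X_zpow_injective.comp (h.comp Sum.inr_injective)))
    fun i j hij => RatFunc.X_zpow_add_X_zpow_ne_zero (x i) (y j) (eq_neg_iff_add_eq_zero.1 hij)

theorem signedXZPow_ne_zero (m : α ⊕ β) : signedXZPow x y m ≠ 0 := by
  rcases m with i | j <;> simp only [signedXZPow, Sum.elim_inl, Sum.elim_inr, neg_ne_zero] <;>
    exact zpow_ne_zero _ RatFunc.X_ne_zero

variable [Fintype α] [Fintype β] [DecidableEq α] [DecidableEq β]

theorem prod_erase_inl_signedXZPow (k : α) :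
    ∏ i ∈ univ.erase (.inl k), (signedXZPow x y i + signedXZPow x y (.inl k)) /
        (signedXZPow x y i - signedXZPow x y (.inl k)) =
      (∏ i ∈ univ.erase k, w (x k - x i)) / ∏ j, w (x k - y j) := by
  rw [prod_univ_erase_inl, div_eq_mul_inv, ← prod_inv_distrib]
  congr 1 <;> refine prod_congr rfl fun i _ => ?_
  · simp [signedXZPow, w_sub]
  · simp only [signedXZPow, Sum.elim_inl, Sum.elim_inr, w_sub, inv_div]
    rw [← neg_div_neg_eq]
    congr 1 <;> ring

theorem prod_erase_inr_signedXZPow (k : β) :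
    ∏ i ∈ univ.erase (.inr k), (signedXZPow x y i + signedXZPow x y (.inr k)) /
        (signedXZPow x y i - signedXZPow x y (.inr k)) =
      (∏ j ∈ univ.erase k, w (y k - y j)) / ∏ i, w (y k - x i) := by
  rw [prod_univ_erase_inr, div_eq_mul_inv, ← prod_inv_distrib, mul_comm]
  congr 1 <;> refine prod_congr rfl fun i _ => ?_
  · simp only [signedXZPow, Sum.elim_inr, w_sub]
    rw [← neg_div_neg_eq]
    congr 1 <;> ring
  · simp only [signedXZPow, Sum.elim_inl, Sum.elim_inr, w_sub, inv_div]
    ring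

end SignedNodes

/-- Proposition: for `2d − 1` distinct integers `x₁, …, x_d, y₁, …, y_{d−1}`,
`∑ₖ (∏_{i≠k} w(xₖ−xᵢ) / ∏ᵢ w(xₖ−yᵢ)) + ∑ₖ (∏_{i≠k} w(yₖ−yᵢ) / ∏ᵢ w(yₖ−xᵢ)) = 1`
in `ℚ(q)`. -/
theorem content_identity (d : ℕ) (hd : 1 ≤ d) (x : Fin d → ℤ) (y : Fin (d - 1) → ℤ)
    (hdist : Function.Injective (Sum.elim x y : Fin d ⊕ Fin (d - 1) → ℤ)) :
    (∑ k : Fin d,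
        (∏ i ∈ Finset.univ.erase k, w (x k - x i)) / ∏ i : Fin (d - 1), w (x k - y i)) +
      (∑ k : Fin (d - 1),
        (∏ i ∈ Finset.univ.erase k, w (y k - y i)) / ∏ i : Fin d, w (y k - x i)) = 1 := by
  have hodd : Odd (Fintype.card (Fin d ⊕ Fin (d - 1))) := by
    rw [Fintype.card_sum, Fintype.card_fin, Fintype.card_fin]
    exact ⟨d - 1, by omega⟩
  have hsum := two_mul_sum_prod_add_div_sub (signedXZPow_injective hdist) signedXZPow_ne_zero
  rw [hodd.neg_one_pow, sub_neg_eq_add, one_add_one_eq_two, mul_eq_left₀ two_ne_zero,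
    Fintype.sum_sum_type] at hsum
  simpa only [prod_erase_inl_signedXZPow, prod_erase_inr_signedXZPow] using hsum
end

section
/- Let F be a field, let n ≥ 1, and let a₁, …, a_n be pairwise distinct elements of F. Then ∑_{k=1}^{n} ∏_{i=1, i≠k}^{n} (a_k + a_i)/(a_k − a_i) equals 0 if n is even and equals 1 if n is odd. -/
open scoped BigOperators

open Polynomial Finset

private lemma key_sum_prod {F : Type*} [Field F] {ι : Type*} [DecidableEq ι] (s : Finset ι) (v : ι → F)
    (hinj : Set.InjOn v s) (h0 : ∀ i ∈ s, v i ≠ 0) (h2 : (2:F) ≠ 0) :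
    ∑ k ∈ s, ∏ i ∈ s.erase k, (v k + v i) / (v k - v i) =
      if Even s.card then 0 else 1 := by
  set N : F[X] := ∏ i ∈ s, (X + C (v i)) with hN
  set P : F[X] := ∏ i ∈ s, (X - C (v i)) with hP
  rcases s.eq_empty_or_nonempty with rfl | hne
  · simp
  have hdegP : P.degree = (s.card : WithBot ℕ) := by
    rw [hP, degree_prod]
    simp [degree_X_sub_C]
  have hdegN : N.degree = (s.card : WithBot ℕ) := by
    rw [hN, degree_prod]
    simp [degree_X_add_C]
  have hNm : N.Monic := monic_prod_of_monic _ _ fun i _ => monic_X_add_C _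
  have hPm : P.Monic := monic_prod_of_monic _ _ fun i _ => monic_X_sub_C _
  have hNne : N ≠ 0 := hNm.ne_zero
  have hdeg : (N - P).degree < (s.card : WithBot ℕ) := by
    rcases eq_or_ne N P with h | h
    · rw [h, sub_self, degree_zero]; exact WithBot.bot_lt_coe _
    calc (N - P).degree < N.degree :=
          degree_sub_lt (hdegN.trans hdegP.symm) hNne (by rw [hNm.leadingCoeff, hPm.leadingCoeff])
      _ = _ := hdegN
  have hinterp := Lagrange.eq_interpolate (f := N - P) hinj (by simpa using hdeg)
  have heval := congrArg (Polynomial.eval 0) hinterp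
  have hPv : ∏ i ∈ s, v i ≠ 0 := prod_ne_zero_iff.mpr h0
  have hL : Polynomial.eval 0 (N - P) = (1 - (-1)^s.card) * ∏ i ∈ s, v i := by
    rw [eval_sub, hN, hP, eval_prod, eval_prod]
    simp only [eval_add, eval_sub, eval_X, eval_C, zero_add, zero_sub]
    have : ∏ i ∈ s, (-v i) = (-1)^s.card * ∏ i ∈ s, v i := by
      calc ∏ i ∈ s, (-v i) = ∏ i ∈ s, ((-1) * v i) :=
            prod_congr rfl fun _ _ => (neg_one_mul _).symm
        _ = (-1)^s.card * ∏ i ∈ s, v i := by rw [prod_mul_distrib, prod_const]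
    rw [this]; ring
  have hR : Polynomial.eval 0 (Lagrange.interpolate s v fun i => (N - P).eval (v i))
      = (2 * (-1)^(s.card - 1) * ∏ i ∈ s, v i) *
        ∑ k ∈ s, ∏ i ∈ s.erase k, (v k + v i) / (v k - v i) := by
    rw [Lagrange.interpolate_apply, eval_finset_sum, mul_sum]
    refine sum_congr rfl fun k hk => ?_
    have hPk : Polynomial.eval (v k) P = 0 := by
      rw [hP, eval_prod]
      exact prod_eq_zero hk (by simp)
    have hNk : Polynomial.eval (v k) N = (2 * v k) * ∏ i ∈ s.erase k, (v k + v i) := by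
      rw [hN, eval_prod]
      simp only [eval_add, eval_X, eval_C]
      rw [← Finset.mul_prod_erase s _ hk]
      ring
    have hBk : Polynomial.eval 0 (Lagrange.basis s v k)
        = ∏ i ∈ s.erase k, ((v k - v i)⁻¹ * (-v i)) := by
      rw [Lagrange.basis, eval_prod]
      refine prod_congr rfl fun i _ => ?_
      simp [Lagrange.basisDivisor]
    rw [eval_mul, eval_C, eval_sub, hPk, hNk, hBk, sub_zero]
    have hcard : (s.erase k).card = s.card - 1 := card_erase_of_mem hk
    have h1 : ∏ i ∈ s.erase k, ((v k - v i)⁻¹ * (-v i))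
        = ((-1)^(s.card - 1) * ∏ i ∈ s.erase k, v i) *
          ∏ i ∈ s.erase k, (v k - v i)⁻¹ := by
      calc ∏ i ∈ s.erase k, ((v k - v i)⁻¹ * (-v i))
          = ∏ i ∈ s.erase k, ((-1) * (v i * (v k - v i)⁻¹)) :=
            prod_congr rfl fun i _ => by ring
        _ = _ := by
            rw [prod_mul_distrib, prod_mul_distrib, prod_const, hcard]; ring
    rw [h1]
    have h2' : ∏ i ∈ s.erase k, (v k + v i) / (v k - v i)
        = (∏ i ∈ s.erase k, (v k + v i)) * ∏ i ∈ s.erase k, (v k - v i)⁻¹ := by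
      rw [← prod_mul_distrib]
      exact prod_congr rfl fun i _ => div_eq_mul_inv _ _
    rw [h2', ← Finset.mul_prod_erase s v hk]
    ring
  rw [hL, hR] at heval
  rcases Nat.even_or_odd s.card with hc | hc
  · rw [if_pos hc]
    rw [hc.neg_one_pow] at heval
    have hA : (2 * (-1:F)^(s.card - 1) * ∏ i ∈ s, v i) ≠ 0 :=
      mul_ne_zero (mul_ne_zero h2 (pow_ne_zero _ (neg_ne_zero.mpr one_ne_zero))) hPv
    have h0' : (0:F) = (2 * (-1:F)^(s.card - 1) * ∏ i ∈ s, v i) *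
        ∑ k ∈ s, ∏ i ∈ s.erase k, (v k + v i) / (v k - v i) := by
      rw [← heval]; ring
    exact ((mul_eq_zero.mp h0'.symm).resolve_left hA)
  · rw [if_neg (Nat.not_even_iff_odd.mpr hc)]
    rw [hc.neg_one_pow, (Nat.Odd.sub_odd hc odd_one).neg_one_pow] at heval
    have hA : (2:F) * ∏ i ∈ s, v i ≠ 0 := mul_ne_zero h2 hPv
    apply mul_left_cancel₀ hA
    linear_combination -heval


/-- For pairwise distinct elements `a₁, …, a_n` of a field `F` with `n ≥ 1`,
`∑ₖ ∏_{i≠k} (aₖ + aᵢ)/(aₖ − aᵢ)` is `0` if `n` is even and `1` if `n` is odd. -/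
theorem sum_prod_ratio (F : Type*) [Field F] (n : ℕ) (hn : 1 ≤ n) (a : Fin n → F)
    (ha : Function.Injective a) :
    ∑ k : Fin n, ∏ i ∈ Finset.univ.erase k, (a k + a i) / (a k - a i) =
      if Even n then 0 else 1 := by
  have hcardu : (Finset.univ : Finset (Fin n)).card = n := by simp
  by_cases h2 : (2:F) = 0
  · -- characteristic 2 : every factor equals 1
    have hone : ∀ k : Fin n, ∏ i ∈ Finset.univ.erase k, (a k + a i) / (a k - a i) = 1 := by
      intro k
      refine Finset.prod_eq_one fun i hi => ?_
      have hne : a k - a i ≠ 0 :=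
        sub_ne_zero.mpr fun h => (Finset.mem_erase.mp hi).1 (ha h).symm
      have : a k + a i = a k - a i := by linear_combination a i * h2
      rw [this, div_self hne]
    rw [Finset.sum_congr rfl fun k _ => hone k, Finset.sum_const, hcardu, nsmul_eq_mul, mul_one]
    rcases Nat.even_or_odd n with h | h
    · rw [if_pos h]
      obtain ⟨m, rfl⟩ := h
      push_cast
      linear_combination (m:F) * h2
    · rw [if_neg (Nat.not_even_iff_odd.mpr h)]
      obtain ⟨m, rfl⟩ := h
      push_cast
      linear_combination (m:F) * h2
  · by_cases h0 : ∀ i, a i ≠ 0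
    · have := key_sum_prod Finset.univ a ha.injOn (fun i _ => h0 i) h2
      rwa [hcardu] at this
    · push_neg at h0
      obtain ⟨j, hj⟩ := h0
      have hnz : ∀ i ∈ Finset.univ.erase j, a i ≠ 0 := fun i hi h =>
        (Finset.mem_erase.mp hi).1 (ha (h.trans hj.symm))
      rw [← Finset.add_sum_erase _ _ (Finset.mem_univ j)]
      have hterm_j : ∏ i ∈ Finset.univ.erase j, (a j + a i) / (a j - a i) = (-1:F)^(n-1) := by
        calc ∏ i ∈ Finset.univ.erase j, (a j + a i) / (a j - a i)
            = ∏ _i ∈ Finset.univ.erase j, (-1 : F) := by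
              refine Finset.prod_congr rfl fun i hi => ?_
              rw [hj, zero_add, zero_sub, div_neg, div_self (hnz i hi)]
          _ = (-1:F)^(n-1) := by
              rw [Finset.prod_const, Finset.card_erase_of_mem (Finset.mem_univ j), hcardu]
      have hrest : ∑ k ∈ Finset.univ.erase j,
          ∏ i ∈ Finset.univ.erase k, (a k + a i) / (a k - a i)
          = if Even (n-1) then 0 else 1 := by
        have hkey := key_sum_prod (Finset.univ.erase j) a
          ha.injOn hnz h2
        rw [Finset.card_erase_of_mem (Finset.mem_univ j), hcardu] at hkey
        rw [← hkey]
        refine Finset.sum_congr rfl fun k hk => ?_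
        have hkj : j ≠ k := fun h => (Finset.mem_erase.mp hk).1 h.symm
        have hjk : j ∈ Finset.univ.erase k := Finset.mem_erase.mpr ⟨hkj, Finset.mem_univ j⟩
        rw [← Finset.insert_erase hjk, Finset.prod_insert (Finset.notMem_erase j _),
          Finset.erase_right_comm]
        have hk0 : a k ≠ 0 := hnz k hk
        rw [hj, add_zero, sub_zero, div_self hk0, one_mul]
      rw [hterm_j, hrest]
      rcases Nat.even_or_odd n with h | h
      · rw [if_pos h]
        have hodd : Odd (n-1) := Nat.Even.sub_odd hn h odd_one
        rw [if_neg (Nat.not_even_iff_odd.mpr hodd), hodd.neg_one_pow]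
        ring
      · rw [if_neg (Nat.not_even_iff_odd.mpr h)]
        have heven : Even (n-1) := Nat.Odd.sub_odd h odd_one
        rw [if_pos heven, heven.neg_one_pow]
        ring
end

section
/- For every n ≥ 1, the following identity holds in the polynomial ring ℤ[a₁, …, a_n]: ∑_{k=1}^{n} (−1)^{k−1} ( ∏_{i=1, i≠k}^{n} (a_k + a_i) ) · ( ∏_{1 ≤ i < j ≤ n, i ≠ k, j ≠ k} (a_i − a_j) ) = δ_n · ∏_{1 ≤ i < j ≤ n} (a_i − a_j), where δ_n = 0 if n is even and δ_n = 1 if n is odd. -/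
/-
The Vandermonde product `V = ∏_{i<j} (aᵢ - aⱼ)` is `(-1)^k ∏_{i≠k} (a_k - aᵢ)` times the
product over the pairs avoiding `k`, so after dividing by `V` in the fraction field the identity
becomes `∑ₖ ∏_{i≠k} (a_k + aᵢ)/(a_k - aᵢ) = δₙ`. This is a Lagrange interpolation identity:
`P = ∏ (X + aᵢ) - ∏ (X - aᵢ)` has degree `< n` and `P(a_k) = 2 a_k ∏_{i≠k} (a_k + aᵢ)`,
and comparing `P(0) = (1 - (-1)^n) ∏ aᵢ` with the barycentric interpolation formula at `0`
gives `(-1)^n - 1 = -2 ∑ₖ ∏_{i≠k} (a_k + aᵢ)/(a_k - aᵢ)`.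
-/

open Finset

section Vandermonde

variable {n : ℕ}

theorem Fin.filter_lt_incident_eq_image_union_image (k : Fin n) :
    univ.filter (fun p : Fin n × Fin n => p.1 < p.2 ∧ ¬(p.1 ≠ k ∧ p.2 ≠ k)) =
      (Iio k).image (·, k) ∪ (Ioi k).image (k, ·) := by
  ext ⟨i, j⟩
  simp only [mem_filter, mem_univ, true_and, mem_union, mem_image, mem_Iio, mem_Ioi,
    Prod.mk.injEq]
  grind

theorem Fin.erase_univ_eq_Iio_union_Ioi (k : Fin n) : univ.erase k = Iio k ∪ Ioi k := by
  ext i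
  simp only [mem_erase, mem_univ, and_true, mem_union, mem_Iio, mem_Ioi]
  exact ne_iff_lt_or_gt

variable {R : Type*} [CommRing R]

theorem Fin.prod_pairs_lt_sub_eq_neg_one_pow_mul_prod_erase_mul_prod_avoid (x : Fin n → R)
    (k : Fin n) :
    ∏ p ∈ univ.filter (fun p : Fin n × Fin n => p.1 < p.2), (x p.1 - x p.2) =
      (-1) ^ (k : ℕ) * (∏ i ∈ univ.erase k, (x k - x i)) *
        ∏ p ∈ univ.filter (fun p : Fin n × Fin n => p.1 < p.2 ∧ p.1 ≠ k ∧ p.2 ≠ k),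
          (x p.1 - x p.2) := by
  have hdisj : Disjoint ((Iio k).image (·, k)) ((Ioi k).image (k, ·)) := by
    simp only [disjoint_left, mem_image, mem_Iio, mem_Ioi, not_exists, not_and]
    rintro _ ⟨i, hi, rfl⟩ j hj h
    simp only [Prod.mk.injEq] at h
    exact hi.ne' h.1
  have htouch : ∏ p ∈ univ.filter (fun p : Fin n × Fin n => p.1 < p.2 ∧ ¬(p.1 ≠ k ∧ p.2 ≠ k)),
      (x p.1 - x p.2) = (-1) ^ (k : ℕ) * ∏ i ∈ univ.erase k, (x k - x i) := by
    rw [Fin.filter_lt_incident_eq_image_union_image, prod_union hdisj,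
      prod_image (Prod.mk_left_injective k).injOn, prod_image (Prod.mk_right_injective k).injOn,
      Fin.erase_univ_eq_Iio_union_Ioi, prod_union (disjoint_Ioi_Iio k).symm, ← mul_assoc,
      ← Fin.card_Iio, ← prod_neg]
    simp only [neg_sub]
  rw [← prod_filter_mul_prod_filter_not _ (fun p : Fin n × Fin n => p.1 ≠ k ∧ p.2 ≠ k),
    filter_filter, filter_filter, htouch, mul_comm]

end Vandermonde

section Interpolation

open Polynomial Lagrange

variable {K ι : Type*} [Field K]

theorem Lagrange.degree_nodal_sub_nodal_lt (s : Finset ι) (v w : ι → K) :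
    (nodal s v - nodal s w).degree < #s := by
  rw [← degree_nodal (v := v)]
  exact degree_sub_lt_left (by rw [degree_nodal, degree_nodal]) nodal_ne_zero
    (by rw [nodal_monic.leadingCoeff, nodal_monic.leadingCoeff])

theorem Lagrange.eval_neg_nodal_neg (s : Finset ι) (v : ι → K) (x : K) :
    (nodal s (-v)).eval (-x) = (-1) ^ #s * (nodal s v).eval x := by
  simp only [eval_nodal, Pi.neg_apply, ← prod_neg, neg_sub, sub_neg_eq_add, neg_add_eq_sub]

variable [DecidableEq ι]

theorem Lagrange.eval_nodal_neg_sub_nodal_at_node {s : Finset ι} {v : ι → K} {k : ι} (hk : k ∈ s) :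
    (nodal s (-v) - nodal s v).eval (v k) = 2 * v k * ∏ i ∈ s.erase k, (v k + v i) := by
  rw [eval_sub, eval_nodal_at_node hk, eval_nodal, ← mul_prod_erase _ _ hk]
  simp only [Pi.neg_apply, sub_neg_eq_add, sub_zero]
  ring

theorem sum_prod_add_div_prod_sub {s : Finset ι} {v : ι → K} (hvs : Set.InjOn v s)
    (hv : ∀ i ∈ s, v i ≠ 0) (h2 : (2 : K) ≠ 0) :
    ∑ k ∈ s, (∏ i ∈ s.erase k, (v k + v i)) / ∏ i ∈ s.erase k, (v k - v i) =
      if Even #s then 0 else 1 := by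
  -- `nodal s (-v) = ∏ i ∈ s, (X + C (v i))`
  set P := nodal s (-v) - nodal s v
  have hbary := eval_interpolate_not_at_node (fun k => P.eval (v k)) (x := 0)
    fun i hi => (hv i hi).symm
  rw [← eq_interpolate hvs (degree_nodal_sub_nodal_lt s (-v) v)] at hbary
  have hterm : ∀ k ∈ s, nodalWeight s v k * (0 - v k)⁻¹ * P.eval (v k) =
      -2 * ((∏ i ∈ s.erase k, (v k + v i)) / ∏ i ∈ s.erase k, (v k - v i)) := by
    intro k hk
    rw [eval_nodal_neg_sub_nodal_at_node hk, nodalWeight, prod_inv_distrib, zero_sub]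
    field_simp [hv k hk]
  rw [sum_congr rfl hterm, ← mul_sum, eval_sub, ← neg_zero, eval_neg_nodal_neg, neg_zero] at hbary
  have hnodal : (nodal s v).eval 0 ≠ 0 := eval_nodal_not_at_node fun i hi => (hv i hi).symm
  have hsign : (-1) ^ #s - 1 = -2 * ∑ k ∈ s,
      (∏ i ∈ s.erase k, (v k + v i)) / ∏ i ∈ s.erase k, (v k - v i) :=
    mul_left_cancel₀ hnodal (by linear_combination hbary)
  split_ifs with hs
  · rw [hs.neg_one_pow, sub_self, eq_comm, mul_eq_zero] at hsign
    exact hsign.resolve_left (neg_ne_zero.mpr h2)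
  · rw [(Nat.not_even_iff_odd.mp hs).neg_one_pow] at hsign
    exact (mul_left_cancel₀ (neg_ne_zero.mpr h2) (by linear_combination hsign)).symm

end Interpolation

theorem sum_neg_one_pow_mul_prod_add_mul_prod_avoid {K : Type*} [Field K] {n : ℕ}
    {x : Fin n → K} (hx : Function.Injective x) (hx0 : ∀ i, x i ≠ 0) (h2 : (2 : K) ≠ 0) :
    ∑ k : Fin n, (-1 : K) ^ (k : ℕ) * (∏ i ∈ univ.erase k, (x k + x i)) *
        ∏ p ∈ univ.filter (fun p : Fin n × Fin n => p.1 < p.2 ∧ p.1 ≠ k ∧ p.2 ≠ k),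
          (x p.1 - x p.2) =
      (if Even n then 0 else 1) *
        ∏ p ∈ univ.filter (fun p : Fin n × Fin n => p.1 < p.2), (x p.1 - x p.2) := by
  have hD : ∀ k, ∏ i ∈ univ.erase k, (x k - x i) ≠ 0 := fun k =>
    prod_ne_zero_iff.mpr fun i hi => sub_ne_zero_of_ne (hx.ne (mem_erase.mp hi).1.symm)
  calc _ = ∑ k : Fin n,
        (∏ p ∈ univ.filter (fun p : Fin n × Fin n => p.1 < p.2), (x p.1 - x p.2)) *
          ((∏ i ∈ univ.erase k, (x k + x i)) / ∏ i ∈ univ.erase k, (x k - x i)) :=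
        sum_congr rfl fun k _ => by
          rw [Fin.prod_pairs_lt_sub_eq_neg_one_pow_mul_prod_erase_mul_prod_avoid x k]
          field_simp [hD k]
    _ = _ := by
      rw [← mul_sum, sum_prod_add_div_prod_sub hx.injOn (fun i _ => hx0 i) h2, card_univ,
        Fintype.card_fin, mul_comm]

open MvPolynomial in
theorem alternating_identity_general (n : ℕ) :
    ∑ k : Fin n, (-1 : MvPolynomial (Fin n) ℤ) ^ (k : ℕ) *
        (∏ i ∈ Finset.univ.erase k, (X k + X i)) *
        ∏ p ∈ Finset.univ.filter
            (fun p : Fin n × Fin n => p.1 < p.2 ∧ p.1 ≠ k ∧ p.2 ≠ k),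
          (X p.1 - X p.2) =
      (if Even n then 0 else 1) *
        ∏ p ∈ Finset.univ.filter (fun p : Fin n × Fin n => p.1 < p.2), (X p.1 - X p.2) := by
  let φ := algebraMap (MvPolynomial (Fin n) ℤ) (FractionRing (MvPolynomial (Fin n) ℤ))
  have hφ : Function.Injective φ := IsFractionRing.injective _ _
  have : CharZero (FractionRing (MvPolynomial (Fin n) ℤ)) := charZero_of_injective_algebraMap hφ
  apply hφ
  simpa only [map_sum, map_mul, map_prod, map_pow, map_neg, map_one, map_add, map_sub,
    apply_ite φ, map_zero] using sum_neg_one_pow_mul_prod_add_mul_prod_avoid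
      (fun i j h => X_injective (hφ h)) (fun i => (map_ne_zero_iff φ hφ).mpr (X_ne_zero i))
      two_ne_zero

open MvPolynomial in
/-- The polynomial identity (1-indexed in the paper; here `k, i, j` run over `Fin n`,
so `(−1)^{k−1}` becomes `(−1)^{(k : ℕ)}`):
`∑ₖ (−1)^{k−1} (∏_{i≠k} (aₖ+aᵢ)) (∏_{i<j, i≠k, j≠k} (aᵢ−aⱼ)) = δₙ ∏_{i<j} (aᵢ−aⱼ)`
in `ℤ[a₁, …, a_n]`, where `δₙ = 0` for `n` even and `δₙ = 1` for `n` odd. -/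
theorem alternating_identity (n : ℕ) (hn : 1 ≤ n) :
    ∑ k : Fin n, (-1 : MvPolynomial (Fin n) ℤ) ^ (k : ℕ) *
        (∏ i ∈ Finset.univ.erase k, (X k + X i)) *
        ∏ p ∈ Finset.univ.filter
            (fun p : Fin n × Fin n => p.1 < p.2 ∧ p.1 ≠ k ∧ p.2 ≠ k),
          (X p.1 - X p.2) =
      (if Even n then 0 else 1) *
        ∏ p ∈ Finset.univ.filter (fun p : Fin n × Fin n => p.1 < p.2), (X p.1 - X p.2) :=
  alternating_identity_general n
end

section
/- Let λ be a partition with outer corners M₁, …, M_d and inner corners N₁, …, N_{d−1} (ordered by increasing row index), and set x_i = c(M_i) and y_i = c(N_i), so that x₁ > y₁ > x₂ > y₂ > ⋯ > y_{d−1} > x_d. For 1 ≤ k ≤ d, let λ⁺ be the partition obtained from λ by adding the outer corner M_k. Then in the field ℚ(q), w(λ⁺) / (w(λ) · w(1)) = ( ∏_{i=1}^{k−1} w(x_i − x_k) / ∏_{i=1}^{k−1} w(y_i − x_k) ) · ( ∏_{i=k+1}^{d} w(x_k − x_i) / ∏_{i=k}^{d−1} w(x_k − y_i) ). -/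
/-!
Write `p = (r, c)` for the added corner `M_k`, so that `x_k = c - r`. Adding `p` creates a cell
of hook length `1` and raises by one the hook lengths of the cells left of `p` in row `r` and
above `p` in column `c`, leaving all other hook lengths unchanged; so the quotient is the product
of `w(h + 1) / w(h)` over these `r + c` cells. The cell `(r, j)` has hook length
`x_k - (j - ℓ_j) - 1`, where `ℓ_j` is the length of column `j`. Over a maximal run of columns of
equal length the product therefore telescopes to `w(x_k - x_i) / w(x_k - y_i)`, where the run
starts at the outer corner `(ℓ_j, j)` and ends at the inner corner `(ℓ_j - 1, j)`. Transposing
turns the column of `p` into a row and yields the other two products.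
-/

open scoped BigOperators

/-- Hook length of the cell `c` in the Young diagram `Y` (0-indexed cells). -/
def hook (Y : YoungDiagram) (c : ℕ × ℕ) : ℕ :=
  Y.rowLen c.1 + Y.colLen c.2 - c.1 - c.2 - 1

/-- `w(λ) = ∏_{x ∈ λ} w(h(x))`. -/
noncomputable def wD (Y : YoungDiagram) : RatFunc ℚ :=
  ∏ c ∈ Y.cells, w (hook Y c)

open Finset

theorem RatFunc.X_zpow_ne_of_sq_eq_one {K : Type*} [Field K] {h : ℤ} (hh : h ≠ 0)
    {u : RatFunc K} (hu : u ^ 2 = 1) : (RatFunc.X : RatFunc K) ^ h ≠ u := by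
  classical
  rintro rfl
  rw [← zpow_natCast, ← zpow_mul] at hu
  have := congrArg (RatFunc.inftyValuation K) hu
  rw [RatFunc.inftyValuation.X_zpow, map_one] at this
  exact hh (by simpa using this)

theorem w_ne_zero {h : ℤ} (hh : h ≠ 0) : w h ≠ 0 := by
  refine div_ne_zero (fun h0 => ?_) (fun h0 => ?_)
  · exact RatFunc.X_zpow_ne_of_sq_eq_one hh (by simp) (eq_neg_of_add_eq_zero_right h0)
  · exact RatFunc.X_zpow_ne_of_sq_eq_one hh (by simp) (sub_eq_zero.1 h0).symm

theorem Finset.prod_range_div_eq_of_runs {K : Type*} [CommGroupWithZero K] {n : ℕ}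
    (f g : ℕ → K) (p : ℕ → Prop) [DecidablePred p]
    (hrun : ∀ j < n, ¬ p (j + 1) → j + 1 < n ∧ g j = f (j + 1)) (hf : ∀ j < n, f j ≠ 0) :
    ∏ j ∈ range n, f j / g j =
      (∏ j ∈ range n with j = 0 ∨ p j, f j) / ∏ j ∈ range n with p (j + 1), g j := by
  have hcancel :
      ∏ j ∈ range n with ¬(j = 0 ∨ p j), f j = ∏ j ∈ range n with ¬p (j + 1), g j := by
    refine prod_nbij' (· - 1) (· + 1) ?_ ?_ ?_ ?_ ?_ <;>
      simp only [mem_filter, mem_range, not_or]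
    · rintro j ⟨hj, hj0, hpj⟩
      exact ⟨by omega, by rwa [Nat.sub_add_cancel (Nat.pos_of_ne_zero hj0)]⟩
    · rintro j ⟨hj, hpj⟩
      exact ⟨(hrun j hj hpj).1, by omega, hpj⟩
    · rintro j ⟨-, hj0, -⟩
      omega
    · intro j _
      omega
    · rintro j ⟨hj, hj0, hpj⟩
      obtain ⟨i, rfl⟩ := Nat.exists_eq_succ_of_ne_zero hj0
      exact (hrun i (by omega) hpj).2.symm
  rw [prod_div_distrib, ← prod_filter_mul_prod_filter_not (range n) (fun j => j = 0 ∨ p j),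
    ← prod_filter_mul_prod_filter_not (range n) (fun j => p (j + 1)) g, hcancel,
    mul_div_mul_right _ _ (hcancel ▸ prod_ne_zero_iff.2 fun j hj => hf j (mem_range.1 (mem_filter.1 hj).1))]

theorem Finset.prod_filter_eq_prod_filter_univ {ι α M : Type*} [Fintype ι] [CommMonoid M]
    {e : ι → α} (he : Function.Injective e) {S : Finset α} (hS : Set.range e = S)
    {q : α → Prop} [DecidablePred q] {p : ι → Prop} [DecidablePred p]
    (hpq : ∀ i, p i ↔ q (e i)) {g : α → M} {f : ι → M} (hfg : ∀ i, f i = g (e i)) :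
    ∏ c ∈ S.filter q, g c = ∏ i ∈ univ.filter p, f i := by
  refine (prod_nbij e (fun i hi => ?_) he.injOn (fun c hc => ?_) fun i _ => hfg i).symm
  · rw [mem_filter] at hi ⊢
    exact ⟨mem_coe.1 (hS ▸ Set.mem_range_self i), (hpq i).1 hi.2⟩
  · rw [coe_filter] at hc
    obtain ⟨i, rfl⟩ : c ∈ Set.range e := hS ▸ hc.1
    exact ⟨i, by simpa [hpq] using hc.2, rfl⟩

namespace YoungDiagram

variable (μ : YoungDiagram)

theorem lt_rowLen_iff_lt_colLen {i j : ℕ} : j < μ.rowLen i ↔ i < μ.colLen j :=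
  mem_iff_lt_rowLen.symm.trans mem_iff_lt_colLen

def outerCorners : Finset (ℕ × ℕ) :=
  (range (μ.colLen 0 + 1) ×ˢ range (μ.rowLen 0 + 1)).filter fun c =>
    c.2 = μ.rowLen c.1 ∧ c.1 = μ.colLen c.2

def innerCorners : Finset (ℕ × ℕ) :=
  μ.cells.filter fun c => c.2 + 1 = μ.rowLen c.1 ∧ c.1 + 1 = μ.colLen c.2

variable {μ}

theorem mem_outerCorners {c : ℕ × ℕ} :
    c ∈ μ.outerCorners ↔ c.2 = μ.rowLen c.1 ∧ c.1 = μ.colLen c.2 := by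
  have := μ.rowLen_anti 0 c.1 (Nat.zero_le _)
  have := μ.colLen_anti 0 c.2 (Nat.zero_le _)
  simp only [outerCorners, mem_filter, mem_product, mem_range]
  omega

theorem mem_innerCorners {c : ℕ × ℕ} :
    c ∈ μ.innerCorners ↔ c.2 + 1 = μ.rowLen c.1 ∧ c.1 + 1 = μ.colLen c.2 := by
  simp only [innerCorners, mem_filter, mem_cells, and_iff_right_iff_imp]
  intro h
  exact mem_iff_lt_rowLen.2 (by omega)

theorem coe_outerCorners :
    (μ.outerCorners : Set (ℕ × ℕ)) =
      {c | c ∉ μ.cells ∧ IsLowerSet (insert c (μ.cells : Set (ℕ × ℕ)))} := by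
  ext ⟨i, j⟩
  have hij := μ.lt_rowLen_iff_lt_colLen (i := i) (j := j)
  simp only [mem_coe, mem_outerCorners, Set.mem_ofPred_eq, mem_cells, mem_iff_lt_rowLen]
  constructor
  · rintro ⟨hj, hi⟩
    refine ⟨by omega, ?_⟩
    rintro ⟨p, q⟩ ⟨a, b⟩ ⟨hap, hbq⟩ (hpq | hpq)
    · obtain ⟨rfl, rfl⟩ := Prod.mk.inj hpq
      have := μ.rowLen_anti a p hap
      have := μ.colLen_anti b q hbq
      have := μ.lt_rowLen_iff_lt_colLen (i := a) (j := b)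
      simp only [Set.mem_insert_iff, Prod.mk.injEq, mem_coe, mem_cells, mem_iff_lt_rowLen]
      omega
    · exact Or.inr (μ.isLowerSet ⟨hap, hbq⟩ hpq)
  · rintro ⟨hc, hl⟩
    have below : ∀ a b, a ≤ i → b ≤ j → (a, b) ≠ (i, j) → (a, b) ∈ μ := fun a b ha hb hne =>
      (hl (b := (a, b)) ⟨ha, hb⟩ (Set.mem_insert _ _)).resolve_left hne
    have hj : j ≤ μ.rowLen i := by
      rcases j with _ | j
      · exact Nat.zero_le _
      · exact mem_iff_lt_rowLen.1 (below i j le_rfl (Nat.le_succ j) (by simp))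
    have hi : i ≤ μ.colLen j := by
      rcases i with _ | i
      · exact Nat.zero_le _
      · exact mem_iff_lt_colLen.1 (below i j (Nat.le_succ i) le_rfl (by simp))
    omega

theorem coe_innerCorners :
    (μ.innerCorners : Set (ℕ × ℕ)) =
      {c | c ∈ μ.cells ∧ IsLowerSet ((μ.cells.erase c : Finset (ℕ × ℕ)) : Set (ℕ × ℕ))} := by
  ext ⟨i, j⟩
  have hij := μ.lt_rowLen_iff_lt_colLen (i := i) (j := j)
  simp only [mem_coe, mem_innerCorners, Set.mem_ofPred_eq, mem_cells, mem_iff_lt_rowLen]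
  constructor
  · rintro ⟨hj, hi⟩
    refine ⟨by omega, ?_⟩
    rintro ⟨p, q⟩ ⟨a, b⟩ ⟨hap, hbq⟩ hpq
    simp only [coe_erase, Set.mem_sdiff, mem_coe, mem_cells, mem_iff_lt_rowLen,
      Set.mem_singleton_iff, Prod.mk.injEq] at hpq ⊢
    have := μ.rowLen_anti a p hap
    have := μ.lt_rowLen_iff_lt_colLen (i := p) (j := q)
    obtain ⟨rfl, rfl⟩ | hab := em (a = i ∧ b = j)
    · have := μ.colLen_anti b q hbq
      omega
    · omega
  · rintro ⟨hc, hl⟩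
    have above : ∀ a b, i ≤ a → j ≤ b → (a, b) ≠ (i, j) → (a, b) ∉ μ :=
      fun a b ha hb hne hab => (mem_erase.1 (hl (a := (a, b)) (b := (i, j)) ⟨ha, hb⟩
        (by simpa [hne] using hab))).1 rfl
    have hj : μ.rowLen i ≤ j + 1 := by
      simpa [mem_iff_lt_rowLen] using above i (j + 1) le_rfl (Nat.le_succ j) (by simp)
    have hi : μ.colLen j ≤ i + 1 := by
      simpa [mem_iff_lt_colLen] using above (i + 1) j (Nat.le_succ i) le_rfl (by simp)
    omega

theorem mem_outerCorners_transpose {c : ℕ × ℕ} :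
    c ∈ μ.transpose.outerCorners ↔ c.swap ∈ μ.outerCorners := by
  simp only [mem_outerCorners, rowLen_transpose, colLen_transpose, Prod.fst_swap,
    Prod.snd_swap, and_comm]

theorem mem_innerCorners_transpose {c : ℕ × ℕ} :
    c ∈ μ.transpose.innerCorners ↔ c.swap ∈ μ.innerCorners := by
  simp only [mem_innerCorners, rowLen_transpose, colLen_transpose, Prod.fst_swap,
    Prod.snd_swap, and_comm]

theorem fst_lt_fst_iff_snd_lt_snd_of_mem_outerCorners {p c : ℕ × ℕ}
    (hp : p ∈ μ.outerCorners) (hc : c ∈ μ.outerCorners) : p.1 < c.1 ↔ c.2 < p.2 := by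
  have := μ.lt_rowLen_iff_lt_colLen (i := p.1) (j := c.2)
  rw [mem_outerCorners] at hp hc
  omega

theorem fst_le_fst_iff_snd_lt_snd_of_mem_innerCorners {p c : ℕ × ℕ}
    (hp : p ∈ μ.outerCorners) (hc : c ∈ μ.innerCorners) : p.1 ≤ c.1 ↔ c.2 < p.2 := by
  have := μ.lt_rowLen_iff_lt_colLen (i := p.1) (j := c.2)
  rw [mem_outerCorners] at hp
  rw [mem_innerCorners] at hc
  omega

theorem filter_outerCorners_snd_lt (n : ℕ) :
    μ.outerCorners.filter (·.2 < n) =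
      ((range n).filter fun j => j = 0 ∨ μ.colLen j < μ.colLen (j - 1)).image
        fun j => (μ.colLen j, j) := by
  ext ⟨i, j⟩
  have := μ.lt_rowLen_iff_lt_colLen (i := μ.colLen j) (j := j)
  have := μ.lt_rowLen_iff_lt_colLen (i := μ.colLen j) (j := j - 1)
  simp only [mem_filter, mem_outerCorners, mem_image, mem_range, Prod.mk.injEq]
  constructor
  · rintro ⟨⟨hj, rfl⟩, hjn⟩
    exact ⟨j, ⟨hjn, by omega⟩, rfl, rfl⟩
  · rintro ⟨j, hj, rfl, rfl⟩
    omega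

theorem filter_innerCorners_snd_lt (n : ℕ) :
    μ.innerCorners.filter (·.2 < n) =
      ((range n).filter fun j => μ.colLen (j + 1) < μ.colLen j).image
        fun j => (μ.colLen j - 1, j) := by
  ext ⟨i, j⟩
  have := μ.lt_rowLen_iff_lt_colLen (i := i) (j := j)
  have := μ.lt_rowLen_iff_lt_colLen (i := i) (j := j + 1)
  simp only [mem_filter, mem_innerCorners, mem_image, mem_range, Prod.mk.injEq]
  constructor
  · rintro ⟨⟨hj, hi⟩, hjn⟩
    exact ⟨j, ⟨hjn, by omega⟩, by omega, rfl⟩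
  · rintro ⟨j, hj, rfl, rfl⟩
    omega

theorem image_fst_outerCorners :
    Prod.fst '' (μ.outerCorners : Set (ℕ × ℕ)) =
      insert 0 ((· + 1) '' (Prod.fst '' (μ.innerCorners : Set (ℕ × ℕ)))) := by
  ext a
  constructor
  · rintro ⟨⟨_ | i, j⟩, hc, rfl⟩
    · exact Set.mem_insert _ _
    have := μ.lt_rowLen_iff_lt_colLen (i := i) (j := j)
    have := μ.lt_rowLen_iff_lt_colLen (i := i) (j := μ.rowLen i - 1)
    have := μ.lt_rowLen_iff_lt_colLen (i := i + 1) (j := μ.rowLen i - 1)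
    simp only [mem_coe, mem_outerCorners] at hc
    refine Or.inr ⟨i, ⟨(i, μ.rowLen i - 1), mem_innerCorners.2 ?_, rfl⟩, rfl⟩
    dsimp only
    omega
  · rintro (rfl | ⟨_, ⟨⟨i, j⟩, hc, rfl⟩, rfl⟩)
    · have := μ.lt_rowLen_iff_lt_colLen (i := 0) (j := μ.rowLen 0)
      exact ⟨(0, μ.rowLen 0), mem_outerCorners.2 ⟨rfl, by dsimp only; omega⟩, rfl⟩
    · have := μ.lt_rowLen_iff_lt_colLen (i := i + 1) (j := μ.rowLen (i + 1))
      have := μ.lt_rowLen_iff_lt_colLen (i := i) (j := μ.rowLen (i + 1))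
      have := μ.lt_rowLen_iff_lt_colLen (i := i + 1) (j := j)
      simp only [mem_coe, mem_innerCorners] at hc
      exact ⟨(i + 1, μ.rowLen (i + 1)), mem_outerCorners.2 ⟨rfl, by dsimp only; omega⟩, rfl⟩

/- The interlacing `x₁ > y₁ > x₂ > ⋯ > y_{d-1} > x_d` of the paper, read off on the rows. -/
theorem fst_eq_cons_of_range_eq {n : ℕ} {M : Fin (n + 1) → ℕ × ℕ} {N : Fin n → ℕ × ℕ}
    (hM : Set.range M = μ.outerCorners) (hMmono : StrictMono fun i => (M i).1)
    (hN : Set.range N = μ.innerCorners) (hNmono : StrictMono fun i => (N i).1) :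
    (fun i => (M i).1) = Fin.cons 0 fun i => (N i).1 + 1 := by
  have hcons_mono : StrictMono (Fin.cons 0 fun i => (N i).1 + 1 : Fin (n + 1) → ℕ) :=
    Fin.strictMono_cons.2
      ⟨fun _ => Nat.succ_pos _, fun _ _ hab => Nat.succ_lt_succ (hNmono hab)⟩
  refine (hMmono.range_inj hcons_mono).1 ?_
  rw [Fin.range_cons, Set.range_comp' (· + 1) fun i => (N i).1, Set.range_comp' Prod.fst N,
    Set.range_comp' Prod.fst M, hM, hN, image_fst_outerCorners]

theorem fst_lt_fst_iff_of_range_eq {d : ℕ} {M : Fin d → ℕ × ℕ} {N : Fin (d - 1) → ℕ × ℕ}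
    (hM : Set.range M = μ.outerCorners) (hMmono : StrictMono fun i => (M i).1)
    (hN : Set.range N = μ.innerCorners) (hNmono : StrictMono fun i => (N i).1)
    (i : Fin (d - 1)) (k : Fin d) : (N i).1 < (M k).1 ↔ (i : ℕ) < k := by
  obtain ⟨n, rfl⟩ : ∃ n, d = n + 1 := ⟨d - 1, by have := i.2; omega⟩
  have hk := congrFun (fst_eq_cons_of_range_eq hM hMmono hN hNmono) k
  induction k using Fin.cases with
  | zero => simp only [hk, Fin.cons_zero, Fin.val_zero, Nat.not_lt_zero]
  | succ k =>
    rw [hk, Fin.cons_succ, Nat.lt_succ_iff, hNmono.le_iff_le, Fin.val_succ, Nat.lt_succ_iff]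
    rfl

def content (c : ℕ × ℕ) : ℤ := c.2 - c.1

theorem content_swap (c : ℕ × ℕ) : content c.swap = -content c := by
  simp [content]

theorem hook_transpose (i j : ℕ) :
    hook μ.transpose (j, i) = hook μ (i, j) := by
  simp only [hook, rowLen_transpose, colLen_transpose]
  omega

theorem hook_pos {c : ℕ × ℕ} (hc : c ∈ μ) : 0 < hook μ c := by
  have := mem_iff_lt_rowLen.1 hc
  have := mem_iff_lt_colLen.1 hc
  simp only [hook]
  omega

section AddCorner

variable {ν : YoungDiagram} {p : ℕ × ℕ}

theorem rowLen_of_cells_eq_insert (hp : p.2 = μ.rowLen p.1) (hν : ν.cells = insert p μ.cells)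
    (i : ℕ) : ν.rowLen i = μ.rowLen i + if i = p.1 then 1 else 0 := by
  refine eq_of_forall_lt_iff fun j => ?_
  rw [← mem_iff_lt_rowLen, ← mem_cells, hν, mem_insert, mem_cells, mem_iff_lt_rowLen,
    Prod.ext_iff]
  split_ifs with h
  · subst h
    omega
  · omega

theorem colLen_of_cells_eq_insert (hp : p.1 = μ.colLen p.2) (hν : ν.cells = insert p μ.cells)
    (j : ℕ) : ν.colLen j = μ.colLen j + if j = p.2 then 1 else 0 := by
  refine eq_of_forall_lt_iff fun i => ?_
  rw [← mem_iff_lt_colLen, ← mem_cells, hν, mem_insert, mem_cells, mem_iff_lt_colLen,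
    Prod.ext_iff]
  split_ifs with h
  · subst h
    omega
  · omega

theorem hook_of_cells_eq_insert (hp : p ∈ μ.outerCorners) (hν : ν.cells = insert p μ.cells)
    {c : ℕ × ℕ} (hc : c ∈ μ) :
    hook ν c = hook μ c + (if c.1 = p.1 then 1 else 0) + if c.2 = p.2 then 1 else 0 := by
  obtain ⟨hp2, hp1⟩ := mem_outerCorners.1 hp
  have := mem_iff_lt_rowLen.1 hc
  have := mem_iff_lt_colLen.1 hc
  simp only [hook, rowLen_of_cells_eq_insert hp2 hν, colLen_of_cells_eq_insert hp1 hν]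
  split_ifs with h1 h2 h2
  · exact absurd (Prod.ext h1 h2 ▸ hc) (by rw [mem_iff_lt_rowLen]; omega)
  all_goals omega

theorem hook_of_cells_eq_insert_self (hp : p ∈ μ.outerCorners)
    (hν : ν.cells = insert p μ.cells) : hook ν p = 1 := by
  obtain ⟨hp2, hp1⟩ := mem_outerCorners.1 hp
  simp only [hook, rowLen_of_cells_eq_insert hp2 hν, colLen_of_cells_eq_insert hp1 hν, if_pos]
  omega

theorem wD_div_of_cells_eq_insert (hp : p ∈ μ.outerCorners) (hν : ν.cells = insert p μ.cells) :
    wD ν / (wD μ * w 1) =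
      (∏ i ∈ range p.1, w (hook μ (i, p.2) + 1) / w (hook μ (i, p.2))) *
        ∏ j ∈ range p.2, w (hook μ (p.1, j) + 1) / w (hook μ (p.1, j)) := by
  obtain ⟨hp2, hp1⟩ := mem_outerCorners.1 hp
  have hpμ : p ∉ μ.cells := by
    rw [mem_cells, mem_iff_lt_rowLen]
    omega
  rw [wD, wD, hν, prod_insert hpμ, hook_of_cells_eq_insert_self hp hν, Nat.cast_one,
    mul_comm _ (w 1), mul_div_mul_left _ _ (w_ne_zero one_ne_zero), ← prod_div_distrib]
  have hdisj : Disjoint (μ.col p.2) (μ.row p.1) := by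
    refine disjoint_left.2 fun c hcol hrow => hpμ ?_
    rw [mem_col_iff] at hcol
    rw [mem_row_iff] at hrow
    exact Prod.ext hrow.2 hcol.2 ▸ hcol.1
  have hcross : μ.col p.2 ∪ μ.row p.1 ⊆ μ.cells := fun c hc => by
    rw [mem_union, mem_col_iff, mem_row_iff] at hc
    exact (mem_cells c).2 (hc.elim And.left And.left)
  rw [← prod_subset hcross, prod_union hdisj, col_eq_prod, row_eq_prod, prod_product,
    prod_product, prod_singleton, ← hp1, ← hp2]
  · congr 1 <;> refine prod_congr rfl fun i hi => ?_ <;> rw [mem_range] at hi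
    · have hmem : (i, p.2) ∈ μ := mem_iff_lt_colLen.2 (hp1 ▸ hi)
      simp [hook_of_cells_eq_insert hp hν hmem, hi.ne]
    · have hmem : (p.1, i) ∈ μ := mem_iff_lt_rowLen.2 (hp2 ▸ hi)
      simp [hook_of_cells_eq_insert hp hν hmem, hi.ne]
  · intro c hc hcross
    rw [mem_cells] at hc
    rw [mem_union, mem_col_iff, mem_row_iff] at hcross
    rw [hook_of_cells_eq_insert hp hν hc, if_neg fun h => hcross (Or.inr ⟨hc, h⟩),
      if_neg fun h => hcross (Or.inl ⟨hc, h⟩), add_zero, add_zero,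
      div_self (w_ne_zero (by exact_mod_cast (hook_pos hc).ne'))]

end AddCorner

theorem prod_row_hook_ratio {p : ℕ × ℕ} (hp : p ∈ μ.outerCorners) :
    ∏ j ∈ range p.2, w (hook μ (p.1, j) + 1) / w (hook μ (p.1, j)) =
      (∏ c ∈ μ.outerCorners.filter (·.2 < p.2), w (content p - content c)) /
        ∏ c ∈ μ.innerCorners.filter (·.2 < p.2), w (content p - content c) := by
  obtain ⟨hp2, hp1⟩ := mem_outerCorners.1 hp
  have hcol : ∀ j < p.2, p.1 < μ.colLen j := fun j hj =>
    μ.lt_rowLen_iff_lt_colLen.1 (hp2 ▸ hj)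
  have hhook : ∀ j < p.2, (hook μ (p.1, j) : ℤ) = content p - content (μ.colLen j - 1, j) ∧
      (hook μ (p.1, j) : ℤ) + 1 = content p - content (μ.colLen j, j) := by
    intro j hj
    have := hcol j hj
    simp only [hook, content]
    push_cast [show p.1 + j + 1 ≤ μ.rowLen p.1 + μ.colLen j by omega, Nat.one_le_of_lt this]
    omega
  rw [filter_outerCorners_snd_lt, filter_innerCorners_snd_lt,
    prod_image fun a _ b _ h => (Prod.ext_iff.1 h).2,
    prod_image fun a _ b _ h => (Prod.ext_iff.1 h).2,
    prod_congr rfl fun j hj => by rw [(hhook j (mem_range.1 hj)).2, (hhook j (mem_range.1 hj)).1]]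
  refine prod_range_div_eq_of_runs (fun j => w (content p - content (μ.colLen j, j)))
    (fun j => w (content p - content (μ.colLen j - 1, j)))
    (fun j => μ.colLen j < μ.colLen (j - 1)) (fun j hj hrun => ?_) (fun j hj => w_ne_zero ?_)
  · have := hcol j hj
    have := μ.colLen_anti j (j + 1) (Nat.le_succ j)
    simp only [Nat.add_sub_cancel, not_lt] at hrun
    refine ⟨?_, ?_⟩
    · by_contra hlast
      rw [show j + 1 = p.2 by omega, ← hp1] at hrun
      omega
    · have hj1 : 1 ≤ μ.colLen j := by omega
      simp only [content]
      push_cast [hj1]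
      congr 1
      omega
  · have := hcol j hj
    simp only [content]
    omega

theorem prod_col_hook_ratio {p : ℕ × ℕ} (hp : p ∈ μ.outerCorners) :
    ∏ i ∈ range p.1, w (hook μ (i, p.2) + 1) / w (hook μ (i, p.2)) =
      (∏ c ∈ μ.outerCorners.filter (·.1 < p.1), w (content c - content p)) /
        ∏ c ∈ μ.innerCorners.filter (·.1 < p.1), w (content c - content p) := by
  have h := prod_row_hook_ratio (mem_outerCorners_transpose.2 hp :
    p.swap ∈ μ.transpose.outerCorners)
  simp only [Prod.fst_swap, Prod.snd_swap, hook_transpose] at h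
  rw [h]
  congr 1 <;> refine prod_equiv (Equiv.prodComm ℕ ℕ) (fun c => ?_) (fun c _ => ?_)
  · simp [mem_outerCorners_transpose]
  · simp [content_swap, neg_sub_comm]
  · simp [mem_innerCorners_transpose]
  · simp [content_swap, neg_sub_comm]

end YoungDiagram

open YoungDiagram

/-- Indices are `0`-based here and `1`-based in the paper. -/
theorem add_corner_weight_general (Y : YoungDiagram) (d : ℕ)
    (M : Fin d → ℕ × ℕ) (N : Fin (d - 1) → ℕ × ℕ)
    (hM : Set.range M =
      {c : ℕ × ℕ | c ∉ Y.cells ∧ IsLowerSet (insert c ↑Y.cells : Set (ℕ × ℕ))})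
    (hMmono : StrictMono fun i => (M i).1)
    (hN : Set.range N =
      {c : ℕ × ℕ | c ∈ Y.cells ∧ IsLowerSet (↑(Y.cells.erase c) : Set (ℕ × ℕ))})
    (hNmono : StrictMono fun i => (N i).1)
    (x : Fin d → ℤ) (hx : ∀ i, x i = ((M i).2 : ℤ) - ((M i).1 : ℤ))
    (y : Fin (d - 1) → ℤ) (hy : ∀ i, y i = ((N i).2 : ℤ) - ((N i).1 : ℤ))
    (k : Fin d) (Z : YoungDiagram) (hZ : Z.cells = insert (M k) Y.cells) :
    wD Z / (wD Y * w 1) =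
      ((∏ i ∈ Finset.univ.filter (fun i : Fin d => i < k), w (x i - x k)) /
          ∏ i ∈ Finset.univ.filter (fun i : Fin (d - 1) => (i : ℕ) < (k : ℕ)),
            w (y i - x k)) *
        ((∏ i ∈ Finset.univ.filter (fun i : Fin d => k < i), w (x k - x i)) /
          ∏ i ∈ Finset.univ.filter (fun i : Fin (d - 1) => (k : ℕ) ≤ (i : ℕ)),
            w (x k - y i)) := by
  have hMc : Set.range M = Y.outerCorners := hM.trans coe_outerCorners.symm
  have hNc : Set.range N = Y.innerCorners := hN.trans coe_innerCorners.symm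
  have hMmem : ∀ i, M i ∈ Y.outerCorners := fun i => mem_coe.1 (hMc ▸ Set.mem_range_self i)
  have hNmem : ∀ i, N i ∈ Y.innerCorners := fun i => mem_coe.1 (hNc ▸ Set.mem_range_self i)
  have hMinj : Function.Injective M := fun a b h => hMmono.injective (congrArg Prod.fst h)
  have hNinj : Function.Injective N := fun a b h => hNmono.injective (congrArg Prod.fst h)
  have hNk := fst_lt_fst_iff_of_range_eq hMc hMmono hNc hNmono
  rw [wD_div_of_cells_eq_insert (hMmem k) hZ, prod_col_hook_ratio (hMmem k),
    prod_row_hook_ratio (hMmem k)]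
  congr 2
  · exact prod_filter_eq_prod_filter_univ hMinj hMc (fun i => hMmono.lt_iff_lt.symm)
      fun i => by rw [hx, hx]; rfl
  · exact prod_filter_eq_prod_filter_univ hNinj hNc (fun i => (hNk i k).symm)
      fun i => by rw [hy, hx]; rfl
  · refine prod_filter_eq_prod_filter_univ hMinj hMc (fun i => ?_) fun i => by rw [hx, hx]; rfl
    rw [← fst_lt_fst_iff_snd_lt_snd_of_mem_outerCorners (hMmem k) (hMmem i)]
    exact hMmono.lt_iff_lt.symm
  · refine prod_filter_eq_prod_filter_univ hNinj hNc (fun i => ?_) fun i => by rw [hy, hx]; rfl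
    rw [← fst_le_fst_iff_snd_lt_snd_of_mem_innerCorners (hMmem k) (hNmem i), ← not_lt, ← hNk,
      not_lt]

/-- Let `λ` have outer corners `M₁, …, M_d` (cells outside `λ` whose addition yields a
Young diagram) and inner corners `N₁, …, N_{d−1}` (cells of `λ` whose removal yields a
Young diagram), both ordered by increasing row index, with contents `xᵢ = c(Mᵢ)`,
`yᵢ = c(Nᵢ)`.  If `λ⁺` is obtained from `λ` by adding the outer corner `M_k`, then
`w(λ⁺)/(w(λ)·w(1)) = (∏_{i<k} w(xᵢ−xₖ)/∏_{i<k} w(yᵢ−xₖ))·(∏_{i>k} w(xₖ−xᵢ)/∏_{i≥k} w(xₖ−yᵢ))`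
(indices `0`-based here, `1`-based in the paper). -/
theorem add_corner_weight (Y : YoungDiagram) (d : ℕ) (hd : 1 ≤ d)
    (M : Fin d → ℕ × ℕ) (N : Fin (d - 1) → ℕ × ℕ)
    (hM : Set.range M =
      {c : ℕ × ℕ | c ∉ Y.cells ∧ IsLowerSet (insert c ↑Y.cells : Set (ℕ × ℕ))})
    (hMmono : StrictMono fun i => (M i).1)
    (hN : Set.range N =
      {c : ℕ × ℕ | c ∈ Y.cells ∧ IsLowerSet (↑(Y.cells.erase c) : Set (ℕ × ℕ))})
    (hNmono : StrictMono fun i => (N i).1)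
    (x : Fin d → ℤ) (hx : ∀ i, x i = ((M i).2 : ℤ) - ((M i).1 : ℤ))
    (y : Fin (d - 1) → ℤ) (hy : ∀ i, y i = ((N i).2 : ℤ) - ((N i).1 : ℤ))
    (k : Fin d) (Z : YoungDiagram) (hZ : Z.cells = insert (M k) Y.cells) :
    wD Z / (wD Y * w 1) =
      ((∏ i ∈ Finset.univ.filter (fun i : Fin d => i < k), w (x i - x k)) /
          ∏ i ∈ Finset.univ.filter (fun i : Fin (d - 1) => (i : ℕ) < (k : ℕ)),
            w (y i - x k)) *
        ((∏ i ∈ Finset.univ.filter (fun i : Fin d => k < i), w (x k - x i)) /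
          ∏ i ∈ Finset.univ.filter (fun i : Fin (d - 1) => (k : ℕ) ≤ (i : ℕ)),
            w (x k - y i)) :=
  add_corner_weight_general Y d M N hM hMmono hN hNmono x hx y hy k Z hZ
end
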